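/- Let X be a nonzero finite-dimensional real normed space. Then n(X) = 0 if and only if there are infinitely many surjective linear isometries of X onto itself. -/

import Mathlib

open MeasureTheory NormedSpace Metric Filter
open scoped ENNReal NNReal Topology

/-- The numerical radius of a bounded linear operator `T` on a normed space `X`:
`v(T) = sup {‖x*(Tx)‖ : ‖x‖ = ‖x*‖ = x*(x) = 1}`. -/
noncomputable def numRadius (𝕜 : Type*) [RCLike 𝕜] (X : Type*) [NormedAddCommGroup X]
    [NormedSpace 𝕜 X] (T : X →L[𝕜] X) : ℝ :=
  sSup {r : ℝ | ∃ (x : X) (f : StrongDual 𝕜 X),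
    ‖x‖ = 1 ∧ ‖f‖ = 1 ∧ f x = 1 ∧ r = ‖f (T x)‖}

/-- The numerical index of a normed space `X`:
`n(X) = inf {v(T) : T ∈ L(X), ‖T‖ = 1}`. -/
noncomputable def numIndex (𝕜 : Type*) [RCLike 𝕜] (X : Type*) [NormedAddCommGroup X]
    [NormedSpace 𝕜 X] : ℝ :=
  sInf {r : ℝ | ∃ T : X →L[𝕜] X, ‖T‖ = 1 ∧ r = numRadius 𝕜 X T}

/-!
A unit operator `B` with numerical radius `0` is exactly one for which both `B` and `-B` are
dissipative (`f (B x) ≤ 0` on every state `(x, f)`), and for such `B` the one-parameter group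
`t ↦ exp (t • B)` consists of isometries (Lumer–Phillips): the right Dini derivative of
`t ↦ ‖exp (t • B) x‖` is `≤ 0` by a compactness argument on norming functionals. Since
`B ≠ 0` this group is a nonconstant continuous path, hence infinite.

Conversely, infinitely many isometries in the compact unit ball of `L(X)` accumulate, so there
are isometries `g ≠ 1` arbitrarily close to `1`. Every `U - 1` with `‖U‖ ≤ 1` is dissipative, so
any limit `B` of the unit operators `(g - 1) / ‖g - 1‖` is dissipative; the same for `g⁻¹`,
whose normalised differences tend to `-B`, shows that `-B` is dissipative too. Hence
`numRadius B = 0` with `‖B‖ = 1`, and the numerical index, which is attained on the compact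
unit sphere, vanishes.
-/

theorem infinite_range_exp_smul {𝔸 : Type*} [NormedRing 𝔸] [NormedAlgebra ℝ 𝔸] [CompleteSpace 𝔸]
    {A : 𝔸} (hA : A ≠ 0) : (Set.range fun t : ℝ => exp (t • A)).Infinite := by
  refine (isPreconnected_range ?_).infinite_of_nontrivial ?_
  · exact continuous_iff_continuousAt.mpr fun t => (hasDerivAt_exp_smul_const A t).continuousAt
  by_contra hconst
  rw [Set.not_nontrivial_iff] at hconst
  have hderiv := hasDerivAt_exp_smul_const A (0 : ℝ)
  rw [show (fun t : ℝ => exp (t • A)) = fun _ => exp ((0 : ℝ) • A) from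
    funext fun t => hconst ⟨t, rfl⟩ ⟨0, rfl⟩] at hderiv
  exact hA (by simpa using hderiv.unique (hasDerivAt_const _ _))

theorem HasDerivAt.eventually_slope_norm_lt {E : Type*} [NormedAddCommGroup E] [NormedSpace ℝ E]
    {Y : ℝ → E} {v : E} {s r r' : ℝ} (hY : HasDerivAt Y v s)
    (hv : ∀ᶠ h in 𝓝[>] (0 : ℝ), ‖Y s + h • v‖ ≤ ‖Y s‖ + r * h) (hr : r < r') :
    ∀ᶠ z in 𝓝[>] s, slope (fun t => ‖Y t‖) s z < r' := by
  have hshift : Tendsto (fun z => z - s) (𝓝[>] s) (𝓝[>] 0) :=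
    tendsto_nhdsWithin_iff.mpr ⟨tendsto_sub_nhds_zero_iff.mpr nhdsWithin_le_nhds,
      eventually_nhdsWithin_of_forall fun _ hz => Set.mem_Ioi.mpr (sub_pos.mpr hz)⟩
  have hrem := (hasDerivAt_iff_isLittleO.mp hY).def (c := (r' - r) / 2) (by linarith)
  filter_upwards [hshift.eventually hv, nhdsWithin_le_nhds hrem, self_mem_nhdsWithin]
    with z hvz hremz hz
  have hz' : 0 < z - s := sub_pos.mpr hz
  rw [Real.norm_of_nonneg hz'.le] at hremz
  have hYz : ‖Y z‖ ≤ ‖Y s + (z - s) • v‖ + ‖Y z - Y s - (z - s) • v‖ := by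
    simpa [sub_sub] using norm_le_norm_add_norm_sub' (Y z) (Y s + (z - s) • v)
  rw [slope_def_field, div_lt_iff₀ hz']
  nlinarith

namespace LinearIsometryEquiv

variable {𝕜 E : Type*} [NontriviallyNormedField 𝕜] [NormedAddCommGroup E] [NormedSpace 𝕜 E]

theorem norm_coe_le_one (g : E ≃ₗᵢ[𝕜] E) : ‖(g : E →L[𝕜] E)‖ ≤ 1 :=
  g.toLinearIsometry.norm_toContinuousLinearMap_le

theorem norm_coe_inv_mul_sub_one (g h : E ≃ₗᵢ[𝕜] E) :
    ‖((g⁻¹ * h : E ≃ₗᵢ[𝕜] E) : E →L[𝕜] E) - 1‖ = ‖(h : E →L[𝕜] E) - (g : E →L[𝕜] E)‖ := by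
  have : ((g⁻¹ * h : E ≃ₗᵢ[𝕜] E) : E →L[𝕜] E) - 1 =
      g.symm.toLinearIsometry.toContinuousLinearMap.comp ((h : E →L[𝕜] E) - (g : E →L[𝕜] E)) := by
    ext x
    simp [-toContinuousLinearEquiv_inv]
  rw [this, LinearIsometry.norm_toContinuousLinearMap_comp]

theorem infinite_setOf_bijective_isometry_iff :
    {U : E →ₗ[𝕜] E | Function.Bijective U ∧ ∀ x, ‖U x‖ = ‖x‖}.Infinite ↔ Infinite (E ≃ₗᵢ[𝕜] E) := by
  have hrange : {U : E →ₗ[𝕜] E | Function.Bijective U ∧ ∀ x, ‖U x‖ = ‖x‖} =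
      Set.range fun g : E ≃ₗᵢ[𝕜] E => (g : E →ₗ[𝕜] E) := by
    ext U
    refine ⟨fun ⟨hU, hnorm⟩ => ⟨⟨LinearEquiv.ofBijective U hU, hnorm⟩, rfl⟩, ?_⟩
    rintro ⟨g, rfl⟩
    exact ⟨g.bijective, g.norm_map⟩
  rw [hrange, Set.infinite_range_iff]
  exact LinearEquiv.toLinearMap_injective.comp toLinearEquiv_injective

end LinearIsometryEquiv

theorem exists_seq_linearIsometryEquiv_tendsto_one {X : Type*} [NormedAddCommGroup X]
    [NormedSpace ℝ X] [FiniteDimensional ℝ X] [Infinite (X ≃ₗᵢ[ℝ] X)] :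
    ∃ g : ℕ → X ≃ₗᵢ[ℝ] X, (∀ n, g n ≠ 1) ∧
      Tendsto (fun n => ‖(g n : X →L[ℝ] X) - 1‖) atTop (𝓝 0) := by
  -- `‖e⁻¹ * e' - 1‖ = ‖e' - e‖`, so consecutive terms of a convergent subsequence do it
  let e := Infinite.natEmbedding (X ≃ₗᵢ[ℝ] X)
  obtain ⟨u, -, φ, hφ, hu⟩ := (isCompact_closedBall (0 : X →L[ℝ] X) 1).tendsto_subseq
    fun n => mem_closedBall_zero_iff.mpr (e n).norm_coe_le_one
  refine ⟨fun n => (e (φ n))⁻¹ * e (φ (n + 1)), fun n h => ?_, ?_⟩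
  · exact (hφ (Nat.lt_succ_self n)).ne (e.injective (inv_mul_eq_one.mp h))
  · simp only [LinearIsometryEquiv.norm_coe_inv_mul_sub_one]
    simpa using ((hu.comp (tendsto_add_atTop_nat 1)).sub hu).norm

section NumericalRadius

variable {𝕜 X : Type*} [RCLike 𝕜] [NormedAddCommGroup X] [NormedSpace 𝕜 X]

theorem norm_apply_le_numRadius (T : X →L[𝕜] X) {x : X} {f : StrongDual 𝕜 X} (hx : ‖x‖ = 1)
    (hf : ‖f‖ = 1) (hfx : f x = 1) : ‖f (T x)‖ ≤ numRadius 𝕜 X T := by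
  refine le_csSup ⟨‖T‖, ?_⟩ ⟨x, f, hx, hf, hfx, rfl⟩
  rintro _ ⟨y, g, hy, hg, -, rfl⟩
  simpa [hy, hg] using g.le_opNorm_of_le (T.le_opNorm_of_le hy.le)

theorem numRadius_nonneg (T : X →L[𝕜] X) : 0 ≤ numRadius 𝕜 X T :=
  Real.sSup_nonneg <| by rintro _ ⟨x, f, -, -, -, rfl⟩; exact norm_nonneg _

theorem numRadius_eq_zero_iff {T : X →L[𝕜] X} :
    numRadius 𝕜 X T = 0 ↔
      ∀ (x : X) (f : StrongDual 𝕜 X), ‖x‖ = 1 → ‖f‖ = 1 → f x = 1 → f (T x) = 0 := by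
  refine ⟨fun h x f hx hf hfx => norm_le_zero_iff.mp ?_, fun h => ?_⟩
  · exact h ▸ norm_apply_le_numRadius T hx hf hfx
  · refine le_antisymm (Real.sSup_le ?_ le_rfl) (numRadius_nonneg T)
    rintro _ ⟨x, f, hx, hf, hfx, rfl⟩
    simp [h x f hx hf hfx]

theorem numRadius_le_add (S T : X →L[𝕜] X) : numRadius 𝕜 X S ≤ numRadius 𝕜 X T + ‖S - T‖ := by
  refine Real.sSup_le ?_ (add_nonneg (numRadius_nonneg T) (norm_nonneg _))
  rintro _ ⟨x, f, hx, hf, hfx, rfl⟩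
  have hST : ‖f ((S - T) x)‖ ≤ ‖S - T‖ := by
    simpa [hx, hf] using f.le_opNorm_of_le ((S - T).le_opNorm_of_le hx.le)
  calc ‖f (S x)‖ = ‖f (T x) + f ((S - T) x)‖ := by simp
    _ ≤ ‖f (T x)‖ + ‖f ((S - T) x)‖ := norm_add_le _ _
    _ ≤ numRadius 𝕜 X T + ‖S - T‖ := add_le_add (norm_apply_le_numRadius T hx hf hfx) hST

theorem lipschitzWith_numRadius : LipschitzWith 1 (numRadius 𝕜 X) :=
  LipschitzWith.of_le_add fun S T => (numRadius_le_add S T).trans_eq (by rw [dist_eq_norm])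

theorem exists_numRadius_eq_numIndex [FiniteDimensional 𝕜 X] [Nontrivial X] :
    ∃ T : X →L[𝕜] X, ‖T‖ = 1 ∧ numRadius 𝕜 X T = numIndex 𝕜 X := by
  have := FiniteDimensional.proper_rclike 𝕜 (X →L[𝕜] X)
  obtain ⟨T, hT, hmin⟩ := (isCompact_sphere (0 : X →L[𝕜] X) 1).exists_isMinOn
    ⟨1, by simp⟩ lipschitzWith_numRadius.continuous.continuousOn
  rw [mem_sphere_zero_iff_norm] at hT
  have hleast : IsLeast {r | ∃ S : X →L[𝕜] X, ‖S‖ = 1 ∧ r = numRadius 𝕜 X S}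
      (numRadius 𝕜 X T) := by
    refine ⟨⟨T, hT, rfl⟩, ?_⟩
    rintro _ ⟨S, hS, rfl⟩
    exact hmin (mem_sphere_zero_iff_norm.mpr hS)
  exact ⟨T, hT, hleast.csInf_eq.symm⟩

theorem numIndex_eq_zero_iff [FiniteDimensional 𝕜 X] [Nontrivial X] :
    numIndex 𝕜 X = 0 ↔ ∃ T : X →L[𝕜] X, ‖T‖ = 1 ∧ numRadius 𝕜 X T = 0 := by
  refine ⟨fun h => h ▸ exists_numRadius_eq_numIndex, ?_⟩
  rintro ⟨T, hT, hT0⟩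
  refine IsLeast.csInf_eq ⟨⟨T, hT, hT0.symm⟩, ?_⟩
  rintro _ ⟨S, -, rfl⟩
  exact numRadius_nonneg S

end NumericalRadius

section Dissipative

variable {X : Type*} [NormedAddCommGroup X] [NormedSpace ℝ X]

def IsDissipative (T : X →L[ℝ] X) : Prop :=
  ∀ (x : X) (f : StrongDual ℝ X), ‖x‖ = 1 → ‖f‖ = 1 → f x = 1 → f (T x) ≤ 0

theorem numRadius_eq_zero_iff_isDissipative {T : X →L[ℝ] X} :
    numRadius ℝ X T = 0 ↔ IsDissipative T ∧ IsDissipative (-T) := by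
  simp only [numRadius_eq_zero_iff, IsDissipative, neg_apply, map_neg,
    neg_nonpos, ← forall_and, ← le_antisymm_iff]

theorem IsDissipative.apply_le_zero {T : X →L[ℝ] X} (hT : IsDissipative T) {f : StrongDual ℝ X}
    (hf : ‖f‖ ≤ 1) {y : X} (hfy : f y = ‖y‖) : f (T y) ≤ 0 := by
  rcases eq_or_ne y 0 with rfl | hy
  · simp
  have hy' : 0 < ‖y‖ := norm_pos_iff.mpr hy
  have hf1 : ‖f‖ = 1 := le_antisymm hf <| le_of_mul_le_mul_right
    (by simpa [← hfy] using le_of_abs_le (f.le_opNorm y)) hy'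
  have := hT (‖y‖⁻¹ • y) f (by simp [norm_smul, hy'.ne']) hf1 (by simp [hfy, hy'.ne'])
  exact nonpos_of_mul_nonpos_right (by simpa [hy'] using this) (inv_pos.mpr hy')

theorem IsDissipative.smul {T : X →L[ℝ] X} (hT : IsDissipative T) {c : ℝ} (hc : 0 ≤ c) :
    IsDissipative (c • T) := fun x f hx hf hfx => by
  simpa using mul_nonpos_of_nonneg_of_nonpos hc (hT x f hx hf hfx)

theorem isDissipative_sub_one {U : X →L[ℝ] X} (hU : ‖U‖ ≤ 1) : IsDissipative (U - 1) :=
  fun x f hx hf hfx => by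
  have := le_of_abs_le (f.le_opNorm_of_le (U.le_opNorm_of_le hx.le))
  simp only [sub_apply, one_apply_eq_self, map_sub, hfx, hf] at this ⊢
  nlinarith

theorem IsDissipative.of_tendsto {ι : Type*} {l : Filter ι} [l.NeBot] {T : ι → X →L[ℝ] X}
    {B : X →L[ℝ] X} (hTB : Tendsto T l (𝓝 B)) (hT : ∀ᶠ i in l, IsDissipative (T i)) :
    IsDissipative B := fun x f hx hf hfx =>
  have hfB : Tendsto (fun i => f (T i x)) l (𝓝 (f (B x))) :=
    (f.continuous.comp (ContinuousLinearMap.apply ℝ X x).continuous).tendsto B |>.comp hTB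
  le_of_tendsto hfB (hT.mono fun _ hi => hi x f hx hf hfx)

theorem IsDissipative.eventually_norm_add_smul_le [FiniteDimensional ℝ X] {T : X →L[ℝ] X}
    (hT : IsDissipative T) (y : X) {r : ℝ} (hr : 0 < r) :
    ∀ᶠ h in 𝓝[>] (0 : ℝ), ‖y + h • T y‖ ≤ ‖y‖ + r * h := by
  -- Otherwise a limit of norming functionals of `y + h • T y` norms `y` and is `≥ r` at `T y`.
  by_contra hcon
  obtain ⟨h, hh, hlarge⟩ := exists_seq_forall_of_frequently
    ((not_eventually.mp hcon).and_eventually self_mem_nhdsWithin)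
  have hh0 : Tendsto h atTop (𝓝 0) := tendsto_nhds_of_tendsto_nhdsWithin hh
  choose f hf hfw using fun n => exists_dual_vector'' ℝ (y + h n • T y)
  simp only [RCLike.ofReal_real_eq_id, id] at hfw
  obtain ⟨g, hg, φ, hφ, hfg⟩ := (isCompact_closedBall (0 : StrongDual ℝ X) 1).tendsto_subseq
    fun n => mem_closedBall_zero_iff.mpr (hf n)
  have hfT (n : ℕ) : r < f n (T y) := by
    have hfy : f n y ≤ ‖y‖ := by
      simpa using le_of_abs_le ((f n).le_of_opNorm_le (hf n) y)
    have hgt := lt_of_not_ge (hlarge n).1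
    rw [← hfw n, map_add, map_smul, smul_eq_mul] at hgt
    nlinarith [(hlarge n).2]
  have hw : Tendsto (fun n => y + h (φ n) • T y) atTop (𝓝 y) := by
    simpa using tendsto_const_nhds.add ((hh0.comp hφ.tendsto_atTop).smul_const (T y))
  have hgy : g y = ‖y‖ := by
    refine tendsto_nhds_unique ?_ (hw.norm.congr fun n => (hfw (φ n)).symm)
    exact (isBoundedBilinearMap_apply.continuous.tendsto (g, y)).comp (hfg.prodMk_nhds hw)
  have hgT : r ≤ g (T y) :=
    ge_of_tendsto ((ContinuousLinearMap.apply ℝ ℝ (T y)).continuous.tendsto g |>.comp hfg)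
      (Eventually.of_forall fun n => (hfT (φ n)).le)
  linarith [hT.apply_le_zero (mem_closedBall_zero_iff.mp hg) hgy]

theorem IsDissipative.norm_exp_smul_apply_le [FiniteDimensional ℝ X] {T : X →L[ℝ] X}
    (hT : IsDissipative T) (x : X) {t : ℝ} (ht : 0 ≤ t) : ‖exp (t • T) x‖ ≤ ‖x‖ := by
  have hY (s : ℝ) : HasDerivAt (fun u : ℝ => exp (u • T) x) (T (exp (s • T) x)) s := by
    simpa using (hasDerivAt_exp_smul_const' T s).clm_apply (hasDerivAt_const s x)
  refine image_le_of_liminf_slope_right_le_deriv_boundary (a := 0) (f := fun u => ‖exp (u • T) x‖)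
    (B := fun _ => ‖x‖) (B' := 0) ?_ (by simp) continuousOn_const
    (fun _ _ => hasDerivWithinAt_const _ _ _) ?_ ⟨ht, le_rfl⟩
  · exact (continuous_iff_continuousAt.mpr fun s => (hY s).continuousAt).norm.continuousOn
  · intro s _ r hr
    exact ((hY s).eventually_slope_norm_lt (hT.eventually_norm_add_smul_le _ (half_pos hr))
      (half_lt_self hr)).frequently

theorem norm_exp_smul_apply [FiniteDimensional ℝ X] {T : X →L[ℝ] X} (hT : IsDissipative T)
    (hT' : IsDissipative (-T)) (t : ℝ) (x : X) : ‖exp (t • T) x‖ = ‖x‖ := by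
  have hle (t : ℝ) (x : X) : ‖exp (t • T) x‖ ≤ ‖x‖ := by
    rcases le_total 0 t with ht | ht
    · exact hT.norm_exp_smul_apply_le x ht
    · simpa using hT'.norm_exp_smul_apply_le x (neg_nonneg.mpr ht)
  refine le_antisymm (hle t x) ?_
  have hinv : exp ((-t) • T) * exp (t • T) = 1 := by
    rw [← exp_add_of_commute_of_mem_ball (𝕂 := ℝ) (((Commute.refl T).smul_left _).smul_right _)
      (by simp [expSeries_radius_eq_top]) (by simp [expSeries_radius_eq_top]), neg_smul,
      neg_add_cancel, exp_zero]
  calc ‖x‖ = ‖(exp ((-t) • T) * exp (t • T)) x‖ := by rw [hinv]; rfl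
    _ ≤ ‖exp (t • T) x‖ := hle _ _

theorem exists_isDissipative_neg_of_tendsto_one [FiniteDimensional ℝ X] {g : ℕ → X ≃ₗᵢ[ℝ] X}
    (hg1 : ∀ n, g n ≠ 1) (hg : Tendsto (fun n => ‖(g n : X →L[ℝ] X) - 1‖) atTop (𝓝 0)) :
    ∃ B : X →L[ℝ] X, ‖B‖ = 1 ∧ IsDissipative B ∧ IsDissipative (-B) := by
  set G := fun n => (g n : X →L[ℝ] X)
  set H : ℕ → X →L[ℝ] X := fun n => ((g n)⁻¹ : X ≃ₗᵢ[ℝ] X)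
  set ε := fun n => ‖G n - 1‖
  have hε (n : ℕ) : 0 < ε n := by
    refine norm_pos_iff.mpr (sub_ne_zero.mpr fun h => hg1 n (LinearIsometryEquiv.ext fun x => ?_))
    simpa [G] using DFunLike.congr_fun h x
  set T := fun n => (ε n)⁻¹ • (G n - 1)
  have hT (n : ℕ) : ‖T n‖ = 1 := by
    rw [norm_smul, norm_inv, Real.norm_of_nonneg (hε n).le, inv_mul_cancel₀ (hε n).ne']
  obtain ⟨B, hB, ψ, hψ, hTB⟩ := (isCompact_sphere (0 : X →L[ℝ] X) 1).tendsto_subseq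
    fun n => mem_sphere_zero_iff_norm.mpr (hT n)
  refine ⟨B, mem_sphere_zero_iff_norm.mp hB, ?_, ?_⟩
  · exact IsDissipative.of_tendsto hTB <| Eventually.of_forall fun n =>
      (isDissipative_sub_one (g _).norm_coe_le_one).smul (inv_nonneg.mpr (hε _).le)
  have hH : Tendsto H atTop (𝓝 1) := by
    rw [tendsto_iff_norm_sub_tendsto_zero]
    refine hg.congr fun n => ?_
    simpa [H, G, norm_sub_rev] using ((g n).norm_coe_inv_mul_sub_one 1).symm
  have hHT (n : ℕ) : -(H n * T n) = (ε n)⁻¹ • (H n - 1) := by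
    ext x
    simp [T, H, G, -LinearIsometryEquiv.toContinuousLinearEquiv_inv, LinearIsometryEquiv.coe_inv,
      smul_sub]
  refine IsDissipative.of_tendsto (l := atTop) (T := fun n => -(H (ψ n) * T (ψ n))) ?_
    (Eventually.of_forall fun n => ?_)
  · simpa using ((hH.comp hψ.tendsto_atTop).mul hTB).neg
  · rw [hHT]
    exact (isDissipative_sub_one (g _)⁻¹.norm_coe_le_one).smul (inv_nonneg.mpr (hε _).le)

theorem infinite_linearIsometryEquiv_of_isDissipative [FiniteDimensional ℝ X] {B : X →L[ℝ] X}
    (hB : IsDissipative B) (hB' : IsDissipative (-B)) (hB0 : B ≠ 0) :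
    Infinite (X ≃ₗᵢ[ℝ] X) := by
  have hsub : (Set.range fun t : ℝ => exp (t • B)) ⊆
      Set.range fun g : X ≃ₗᵢ[ℝ] X => (g : X →L[ℝ] X) := by
    rintro _ ⟨t, rfl⟩
    let e : X →ₗᵢ[ℝ] X := ⟨((exp (t • B) : X →L[ℝ] X) : X →ₗ[ℝ] X), norm_exp_smul_apply hB hB' t⟩
    exact ⟨e.toLinearIsometryEquiv rfl, ContinuousLinearMap.ext fun _ => rfl⟩
  refine (Set.infinite_range_iff fun g h hgh => ?_).mp ((infinite_range_exp_smul hB0).mono hsub)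
  exact LinearIsometryEquiv.ext fun x => DFunLike.congr_fun hgh x

end Dissipative

/-- A nonzero finite-dimensional real normed space has numerical index `0` if and only
if it admits infinitely many surjective linear isometries onto itself. -/
theorem numIndex_eq_zero_iff_infinite_isometries (X : Type*) [NormedAddCommGroup X]
    [NormedSpace ℝ X] [FiniteDimensional ℝ X] [Nontrivial X] :
    numIndex ℝ X = 0 ↔
      {U : X →ₗ[ℝ] X | Function.Bijective U ∧ ∀ x : X, ‖U x‖ = ‖x‖}.Infinite := by
  rw [numIndex_eq_zero_iff, LinearIsometryEquiv.infinite_setOf_bijective_isometry_iff]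
  constructor
  · rintro ⟨B, hB1, hB0⟩
    obtain ⟨hB, hB'⟩ := numRadius_eq_zero_iff_isDissipative.mp hB0
    exact infinite_linearIsometryEquiv_of_isDissipative hB hB' (by rintro rfl; simp at hB1)
  · intro _
    obtain ⟨g, hg1, hg⟩ := exists_seq_linearIsometryEquiv_tendsto_one (X := X)
    obtain ⟨B, hB1, hB, hB'⟩ := exists_isDissipative_neg_of_tendsto_one hg1 hg
    exact ⟨B, hB1, numRadius_eq_zero_iff_isDissipative.mpr ⟨hB, hB'⟩⟩
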